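/- arXiv:1105.4042 — 6 statements merged into one kernel-verified Lean document; each statement's English description precedes it below -/
import Mathlib

section
/- For all positive integers m and d, the number of integer tuples (k₁, …, k_d) ∈ ℤᵈ with ∑_{j=1}^d |k_j| ≤ m is at most (e(2d+m)/m)^m. -/
open Finset

section aux

/-- `Multiset.card` as an `AddMonoidHom`. -/
def mcardHom {α : Type*} : Multiset α →+ ℕ :=
  ⟨⟨Multiset.card, Multiset.card_zero⟩, Multiset.card_add⟩

/-- encoding multiset -/
noncomputable def msr (m d : ℕ) (k : Fin d → ℤ) : Multiset (Fin (2*d+1)) :=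
  (∑ j : Fin d, ((k j).toNat • ({⟨j.1, by omega⟩} : Multiset (Fin (2*d+1)))
      + ((-(k j)).toNat • ({⟨d + j.1, by omega⟩} : Multiset (Fin (2*d+1))))))
    + (m - (∑ j, (k j).natAbs)) • ({⟨2*d, by omega⟩} : Multiset (Fin (2*d+1)))

lemma msr_card (m d : ℕ) (k : Fin d → ℤ) (h : ∑ j, (k j).natAbs ≤ m) :
    Multiset.card (msr m d k) = m := by
  have hsum : Multiset.card (∑ j : Fin d, ((k j).toNat • ({⟨j.1, by omega⟩} : Multiset (Fin (2*d+1)))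
      + ((-(k j)).toNat • ({⟨d + j.1, by omega⟩} : Multiset (Fin (2*d+1)))))) =
      ∑ j : Fin d, ((k j).toNat + (-(k j)).toNat) := by
    rw [show (Multiset.card : Multiset (Fin (2*d+1)) → ℕ) = mcardHom from rfl,
      map_sum]
    refine Finset.sum_congr rfl fun j _ => ?_
    show Multiset.card _ = _
    simp [Multiset.card_nsmul]
  have habs : ∑ j : Fin d, ((k j).toNat + (-(k j)).toNat) = ∑ j, (k j).natAbs :=
    Finset.sum_congr rfl fun j _ => by omega
  rw [msr, Multiset.card_add, hsum, habs, Multiset.card_nsmul, Multiset.card_singleton]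
  omega

lemma msr_count_pos (m d : ℕ) (k : Fin d → ℤ) (j : Fin d) :
    (msr m d k).count ⟨j.1, by omega⟩ = (k j).toNat := by
  have hj := j.2
  simp only [msr, Multiset.count_add, Multiset.count_sum', Multiset.count_nsmul,
    Multiset.count_singleton]
  rw [Finset.sum_eq_single j]
  · have h1 : (⟨j.1, by omega⟩ : Fin (2*d+1)) ≠ ⟨d + j.1, by omega⟩ := by
      simp only [ne_eq, Fin.mk.injEq]; omega
    have h2 : (⟨j.1, by omega⟩ : Fin (2*d+1)) ≠ ⟨2*d, by omega⟩ := by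
      simp only [ne_eq, Fin.mk.injEq]; omega
    simp [h1, h2]
  · intro b _ hb
    have h1 : (⟨j.1, by omega⟩ : Fin (2*d+1)) ≠ ⟨b.1, by omega⟩ := by
      simp only [ne_eq, Fin.mk.injEq]
      exact fun hh => hb (Fin.ext hh.symm)
    have h2 : (⟨j.1, by omega⟩ : Fin (2*d+1)) ≠ ⟨d + b.1, by omega⟩ := by
      simp only [ne_eq, Fin.mk.injEq]; omega
    simp [h1, h2]
  · simp

lemma msr_count_neg (m d : ℕ) (k : Fin d → ℤ) (j : Fin d) :
    (msr m d k).count ⟨d + j.1, by omega⟩ = (-(k j)).toNat := by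
  have hj := j.2
  simp only [msr, Multiset.count_add, Multiset.count_sum', Multiset.count_nsmul,
    Multiset.count_singleton]
  rw [Finset.sum_eq_single j]
  · have h1 : (⟨d + j.1, by omega⟩ : Fin (2*d+1)) ≠ ⟨j.1, by omega⟩ := by
      simp only [ne_eq, Fin.mk.injEq]; omega
    have h2 : (⟨d + j.1, by omega⟩ : Fin (2*d+1)) ≠ ⟨2*d, by omega⟩ := by
      simp only [ne_eq, Fin.mk.injEq]; omega
    simp [h1, h2]
  · intro b hb' hb
    have hb2 := b.2
    have h1 : (⟨d + j.1, by omega⟩ : Fin (2*d+1)) ≠ ⟨b.1, by omega⟩ := by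
      simp only [ne_eq, Fin.mk.injEq]; omega
    have h2 : (⟨d + j.1, by omega⟩ : Fin (2*d+1)) ≠ ⟨d + b.1, by omega⟩ := by
      simp only [ne_eq, Fin.mk.injEq]
      intro hh
      exact hb (Fin.ext (by omega : b.1 = j.1))
    simp [h1, h2]
  · simp

end aux

theorem combinatorial_upper_bound (m d : ℕ) (hm : 0 < m) (hd : 0 < d) :
    (({k : Fin d → ℤ | ∑ j, |k j| ≤ (m : ℤ)}.ncard : ℝ)) ≤
      (Real.exp 1 * (2 * d + m) / m) ^ m := by
  set S := {k : Fin d → ℤ | ∑ j, |k j| ≤ (m : ℤ)} with hS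
  have hmem : ∀ k : Fin d → ℤ, k ∈ S → ∑ j, (k j).natAbs ≤ m := by
    intro k hk
    have h1 : (∑ j, ((k j).natAbs : ℤ)) ≤ (m : ℤ) := by
      have := hk
      rw [hS, Set.mem_setOf_eq,
        Finset.sum_congr rfl fun j _ => Int.abs_eq_natAbs (k j)] at this
      exact this
    exact_mod_cast h1
  have hcard : S.ncard ≤ Nat.choose (2*d + m) m := by
    have hle : Nat.card S ≤ Nat.card (Sym (Fin (2*d+1)) m) :=
      Nat.card_le_card_of_injective
        (fun k : S => (⟨msr m d k.1, msr_card m d k.1 (hmem k.1 k.2)⟩ :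
          Sym (Fin (2*d+1)) m)) (by
      intro a b hab
      have h : msr m d a.1 = msr m d b.1 := congrArg Subtype.val hab
      apply Subtype.ext
      funext j
      have hp := (msr_count_pos m d a.1 j).symm.trans
        (h ▸ msr_count_pos m d b.1 j)
      have hn := (msr_count_neg m d a.1 j).symm.trans
        (h ▸ msr_count_neg m d b.1 j)
      omega)
    calc S.ncard = Nat.card S := rfl
      _ ≤ Nat.card (Sym (Fin (2*d+1)) m) := hle
      _ = Fintype.card (Sym (Fin (2*d+1)) m) := Nat.card_eq_fintype_card
      _ = Nat.multichoose (2*d+1) m := by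
          rw [Sym.card_sym_eq_multichoose, Fintype.card_fin]
      _ = Nat.choose (2*d + m) m := by
          rw [Nat.multichoose_eq]; congr 1; omega
  have hm' : (0:ℝ) < m := by exact_mod_cast hm
  set n : ℕ := 2*d + m with hn
  have hfac : (0:ℝ) < Nat.factorial m := by positivity
  have key : (m:ℝ)^m ≤ Real.exp 1 ^ m * Nat.factorial m := by
    have hterm : (m:ℝ)^m / Nat.factorial m ≤
        ∑ i ∈ Finset.range (m+1), (m:ℝ)^i / Nat.factorial i :=
      Finset.single_le_sum (f := fun i => (m:ℝ)^i / Nat.factorial i)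
        (fun i _ => by positivity) (Finset.self_mem_range_succ m)
    have hexp := Real.sum_le_exp_of_nonneg (le_of_lt hm') (m+1)
    have h2 : (m:ℝ)^m / Nat.factorial m ≤ Real.exp m := hterm.trans hexp
    rw [div_le_iff₀ hfac] at h2
    calc (m:ℝ)^m ≤ Real.exp m * Nat.factorial m := h2
      _ = Real.exp 1 ^ m * Nat.factorial m := by
          rw [← Real.exp_nat_mul]; norm_num
  have hcast : ((2:ℝ) * d + m) = (n:ℝ) := by rw [hn]; push_cast; ring
  calc (S.ncard : ℝ) ≤ (Nat.choose n m : ℝ) := by exact_mod_cast hcard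
    _ ≤ (n:ℝ)^m / (Nat.factorial m) := Nat.choose_le_pow_div m n
    _ ≤ (Real.exp 1 * (2 * d + m) / m) ^ m := by
        rw [hcast, div_pow, mul_pow,
          div_le_div_iff₀ hfac (pow_pos hm' m)]
        calc (n:ℝ)^m * (m:ℝ)^m
            ≤ (n:ℝ)^m * (Real.exp 1 ^ m * Nat.factorial m) :=
              mul_le_mul_of_nonneg_left key (by positivity)
          _ = Real.exp 1 ^ m * (n:ℝ)^m * Nat.factorial m := by ring
end

section
/- The function g(x) = x·√(ln(1 + 1/x)) is nondecreasing on (0, ∞), and g(x) ≤ √(ln 2) for all 0 < x ≤ 1. -/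
open Real Set

private lemma hasDerivAt_aux (x : ℝ) (hx : 0 < x) :
    HasDerivAt (fun x : ℝ => x^2 * Real.log (1 + 1/x))
      (2*x*Real.log (1+1/x) - x/(x+1)) x := by
  have hx0 : x ≠ 0 := hx.ne'
  have h1 : (1 : ℝ) + 1/x ≠ 0 := by positivity
  have hu : HasDerivAt (fun x : ℝ => 1 + 1/x) (-(x^2)⁻¹) x := by
    simpa [one_div] using (hasDerivAt_inv hx0).const_add (1:ℝ)
  have hlog : HasDerivAt (fun x : ℝ => Real.log (1 + 1/x))
      (-(x^2)⁻¹ / (1 + 1/x)) x := hu.log h1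
  have hsq : HasDerivAt (fun x : ℝ => x^2) (2*x) x := by
    simpa using hasDerivAt_pow 2 x
  have := hsq.mul hlog
  refine this.congr_deriv ?_
  field_simp
  ring

private lemma log_lb (x : ℝ) (hx : 0 < x) : 1 / (x + 1) ≤ Real.log (1 + 1/x) := by
  have hy : (0:ℝ) < 1 + 1/x := by positivity
  have h := Real.log_le_sub_one_of_pos (x := (1 + 1/x)⁻¹) (by positivity)
  rw [Real.log_inv] at h
  have : (1 + 1/x)⁻¹ - 1 = -(1/(x+1)) := by field_simp; ring
  rw [this] at h
  linarith

private lemma mono_aux : MonotoneOn (fun x : ℝ => x^2 * Real.log (1 + 1/x)) (Set.Ioi 0) := by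
  apply monotoneOn_of_deriv_nonneg (convex_Ioi 0)
  · exact fun x hx => ((hasDerivAt_aux x hx).continuousAt).continuousWithinAt
  · rw [interior_Ioi]
    exact fun x hx => (hasDerivAt_aux x hx).differentiableAt.differentiableWithinAt
  · rw [interior_Ioi]
    intro x hx
    rw [(hasDerivAt_aux x hx).deriv]
    have hlb := log_lb x hx
    have h2 : x / (x+1) ≤ 2*x*Real.log (1+1/x) := by
      have : x / (x+1) = x * (1/(x+1)) := by ring
      rw [this]
      have := mul_le_mul_of_nonneg_left hlb hx.le
      nlinarith [Real.log_nonneg (by nlinarith [one_div_pos.mpr (show (0:ℝ) < x from hx)] : (1:ℝ) ≤ 1 + 1/x), (show (0:ℝ) < x from hx).le]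
    linarith

private lemma g_eq (x : ℝ) (hx : 0 < x) :
    x * Real.sqrt (Real.log (1 + 1/x)) = Real.sqrt (x^2 * Real.log (1 + 1/x)) := by
  rw [Real.sqrt_mul (sq_nonneg x), Real.sqrt_sq hx.le]

theorem monotone_and_bound_x_mul_sqrt_log :
    MonotoneOn (fun x : ℝ => x * Real.sqrt (Real.log (1 + 1 / x))) (Set.Ioi 0) ∧
      ∀ x : ℝ, 0 < x → x ≤ 1 →
        x * Real.sqrt (Real.log (1 + 1 / x)) ≤ Real.sqrt (Real.log 2) := by
  have hmono : MonotoneOn (fun x : ℝ => x * Real.sqrt (Real.log (1 + 1 / x))) (Set.Ioi 0) := by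
    intro a ha b hb hab
    simp only
    rw [g_eq a ha, g_eq b hb]
    exact Real.sqrt_le_sqrt (mono_aux ha hb hab)
  refine ⟨hmono, fun x hx hx1 => ?_⟩
  have := hmono (Set.mem_Ioi.mpr hx) (Set.mem_Ioi.mpr one_pos) hx1
  norm_num at this; simpa using this
end

section
/- Fix a real number α ≥ 2, reals y and B with |y| ≤ B, and define φ: ℝ → ℝ by φ(z) = |y − z|^α for |z| ≤ B, φ(z) = |y − B|^α + α|y − B|^{α−1}(z − B) for z > B, and φ(z) = |y + B|^α − α|y + B|^{α−1}(z + B) for z < −B. Then for all z ∈ ℝ, |y − clip_B(z)|^α ≤ φ(z) ≤ |y − z|^α, where clip_B(z) = min{B, max{−B, z}}. -/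
open Real in
private lemma tangent_le_rpow (a t α : ℝ) (ha : 0 ≤ a) (ht : 0 ≤ t) (hα : 2 ≤ α) :
    a ^ α + α * a ^ (α - 1) * t ≤ (a + t) ^ α := by
  rcases eq_or_lt_of_le ha with rfl | ha
  · rw [Real.zero_rpow (by linarith), Real.zero_rpow (by linarith), zero_add]
    simpa using Real.rpow_nonneg ht α
  · have hs : (-1 : ℝ) ≤ t / a := by
      have := div_nonneg ht ha.le; linarith
    have hb := one_add_mul_self_le_rpow_one_add hs (p := α) (by linarith)
    have h1 : a + t = a * (1 + t / a) := by field_simp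
    have h2 : (a + t) ^ α = a ^ α * (1 + t / a) ^ α := by
      rw [h1, Real.mul_rpow ha.le (by positivity)]
    have h3 : a ^ α * (1 + α * (t / a)) ≤ a ^ α * (1 + t / a) ^ α :=
      mul_le_mul_of_nonneg_left hb (Real.rpow_nonneg ha.le α)
    have h4 : a ^ (α - 1) = a ^ α / a := by
      rw [Real.rpow_sub ha, Real.rpow_one]
    rw [h2]
    calc a ^ α + α * a ^ (α - 1) * t = a ^ α * (1 + α * (t / a)) := by
          rw [h4]; field_simp
      _ ≤ _ := h3

open Real in
theorem lipschitzified_loss_sandwich (α y B : ℝ) (hα : 2 ≤ α) (hB : 0 < B)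
    (hy : |y| ≤ B)
    (φ : ℝ → ℝ)
    (hφ : ∀ z : ℝ, φ z =
      if |z| ≤ B then |y - z| ^ α
      else if B < z then |y - B| ^ α + α * |y - B| ^ (α - 1) * (z - B)
      else |y + B| ^ α - α * |y + B| ^ (α - 1) * (z + B)) :
    ∀ z : ℝ,
      |y - min B (max (-B) z)| ^ α ≤ φ z ∧ φ z ≤ |y - z| ^ α := by
  obtain ⟨hy1, hy2⟩ := abs_le.mp hy
  intro z
  rw [hφ z]
  by_cases h1 : |z| ≤ B
  · obtain ⟨hz1, hz2⟩ := abs_le.mp h1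
    rw [if_pos h1, min_eq_right (by simp [max_le_iff]; constructor <;> linarith),
      max_eq_right hz1]
    exact ⟨le_refl _, le_refl _⟩
  · rw [if_neg h1]
    by_cases h2 : B < z
    · rw [if_pos h2, min_eq_left (le_max_of_le_right h2.le)]
      constructor
      · have : 0 ≤ α * |y - B| ^ (α - 1) * (z - B) := by
          have := Real.rpow_nonneg (abs_nonneg (y - B)) (α - 1)
          exact mul_nonneg (mul_nonneg (by linarith) this) (by linarith)
        linarith
      · have hab : |y - B| = B - y := by rw [abs_sub_comm, abs_of_nonneg (by linarith)]
        have hyz : |y - z| = (B - y) + (z - B) := by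
          rw [abs_sub_comm, abs_of_nonneg (by linarith)]; ring
        rw [hab, hyz]
        exact tangent_le_rpow (B - y) (z - B) α (by linarith) (by linarith) hα
    · rw [if_neg h2]
      have hz : z < -B := by
        by_contra h
        push_neg at h
        exact h1 (abs_le.mpr ⟨h, not_lt.mp h2⟩)
      rw [max_eq_left hz.le, min_eq_right (by linarith), sub_neg_eq_add]
      have hab : |y + B| = y + B := abs_of_nonneg (by linarith)
      constructor
      · have : 0 ≤ α * |y + B| ^ (α - 1) * (-(z + B)) := by
          have := Real.rpow_nonneg (abs_nonneg (y + B)) (α - 1)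
          exact mul_nonneg (mul_nonneg (by linarith) this) (by linarith)
        linarith
      · have hyz : |y - z| = (y + B) + (-(z + B)) := by
          rw [abs_of_nonneg (by linarith)]; ring
        rw [hab, hyz]
        have := tangent_le_rpow (y + B) (-(z + B)) α (by linarith) (by linarith) hα
        linarith
end

section
/- Fix α ≥ 2, reals y and B with |y| ≤ B, and let φ: ℝ → ℝ be the function equal to |y − z|^α on [−B, B] and extended linearly with the tangent slope outside. Then φ is convex on ℝ. -/
open Real Filter Set

private lemma rpow_split {α : ℝ} (hα : 2 ≤ α) {t : ℝ} (ht : 0 ≤ t) :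
    t ^ (α - 1) = t ^ (α - 2) * t := by
  rcases ht.eq_or_lt with h | h
  · rw [← h, Real.zero_rpow (by linarith), mul_zero]
  · rw [show α - 1 = (α - 2) + 1 by ring, Real.rpow_add h, Real.rpow_one]

private lemma signedPow_mono {α : ℝ} (hα : 2 ≤ α) {s t : ℝ} (hst : s ≤ t) :
    |s| ^ (α - 2) * s ≤ |t| ^ (α - 2) * t := by
  rcases le_or_gt 0 s with hs | hs
  · have ht : 0 ≤ t := hs.trans hst
    rw [abs_of_nonneg hs, abs_of_nonneg ht, ← rpow_split hα hs, ← rpow_split hα ht]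
    exact Real.rpow_le_rpow hs hst (by linarith)
  · rcases le_or_gt t 0 with ht | ht
    · have h := Real.rpow_le_rpow (by linarith : (0:ℝ) ≤ -t) (by linarith : -t ≤ -s)
        (by linarith : (0:ℝ) ≤ α - 1)
      have e1 : |s| ^ (α - 2) * s = -((-s) ^ (α - 1)) := by
        rw [abs_of_neg hs, rpow_split hα (by linarith : (0:ℝ) ≤ -s)]; ring
      have e2 : |t| ^ (α - 2) * t = -((-t) ^ (α - 1)) := by
        rw [abs_of_nonpos ht, rpow_split hα (by linarith : (0:ℝ) ≤ -t)]; ring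
      rw [e1, e2]; linarith
    · have h1 : |s| ^ (α - 2) * s ≤ 0 :=
        mul_nonpos_of_nonneg_of_nonpos (Real.rpow_nonneg (abs_nonneg s) _) hs.le
      have h2 : 0 ≤ |t| ^ (α - 2) * t :=
        mul_nonneg (Real.rpow_nonneg (abs_nonneg t) _) ht.le
      linarith

private lemma absPow_hasDerivAt {α : ℝ} (hα : 2 ≤ α) (t : ℝ) :
    HasDerivAt (fun s : ℝ => |s| ^ α) (α * (|t| ^ (α - 2) * t)) t := by
  rcases lt_trichotomy t 0 with ht | rfl | ht
  · have h1 : HasDerivAt (fun s : ℝ => (-s) ^ α) ((α * (-t) ^ (α - 1)) * (-1)) t := by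
      have h2 := Real.hasDerivAt_rpow_const (x := -t) (p := α) (Or.inl (by linarith))
      exact h2.comp t ((hasDerivAt_id t).neg)
    have h3 : (fun s : ℝ => |s| ^ α) =ᶠ[nhds t] (fun s : ℝ => (-s) ^ α) := by
      filter_upwards [Iio_mem_nhds ht] with s hs
      rw [abs_of_neg hs]
    have h4 := h1.congr_of_eventuallyEq h3
    exact h4.congr_deriv (by
      rw [abs_of_neg ht, rpow_split hα (by linarith : (0:ℝ) ≤ -t)]
      ring)
  · have h0 : α * (|(0:ℝ)| ^ (α - 2) * 0) = 0 := by ring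
    rw [h0, hasDerivAt_iff_tendsto_slope]
    have key : ∀ z : ℝ, ‖slope (fun s : ℝ => |s| ^ α) 0 z‖ ≤ |z| ^ (α - 1) := by
      intro z
      rcases eq_or_ne z 0 with rfl | hz
      · simp [slope_def_field, Real.rpow_nonneg]
      · have hz' : (0:ℝ) < |z| := abs_pos.mpr hz
        rw [slope_def_field, abs_zero, Real.zero_rpow (by linarith : α ≠ 0), sub_zero,
          sub_zero, Real.norm_eq_abs, abs_div,
          abs_of_nonneg (Real.rpow_nonneg (abs_nonneg z) α),
          Real.rpow_sub hz' α 1, Real.rpow_one]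
    have hcont : Tendsto (fun z : ℝ => |z| ^ (α - 1)) (nhds 0) (nhds 0) := by
      have hc : ContinuousAt (fun z : ℝ => |z| ^ (α - 1)) 0 :=
        (continuous_abs.continuousAt).rpow_const (Or.inr (by linarith))
      have hv : |(0:ℝ)| ^ (α - 1) = 0 := by
        rw [abs_zero, Real.zero_rpow (by linarith)]
      simpa [abs_zero, Real.zero_rpow (show α - 1 ≠ 0 by linarith)] using hc.tendsto
    exact squeeze_zero_norm key (hcont.mono_left nhdsWithin_le_nhds)
  · have h1 := Real.hasDerivAt_rpow_const (x := t) (p := α) (Or.inl (ne_of_gt ht))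
    have h3 : (fun s : ℝ => |s| ^ α) =ᶠ[nhds t] (fun s : ℝ => s ^ α) := by
      filter_upwards [Ioi_mem_nhds ht] with s hs
      rw [abs_of_pos hs]
    have h4 := h1.congr_of_eventuallyEq h3
    exact h4.congr_deriv (by
      rw [abs_of_pos ht, rpow_split hα ht.le])

open Real in
theorem lipschitzified_loss_convex (α y B : ℝ) (hα : 2 ≤ α) (hB : 0 < B)
    (hy : |y| ≤ B)
    (φ : ℝ → ℝ)
    (hφ : ∀ z : ℝ, φ z =
      if |z| ≤ B then |y - z| ^ α
      else if B < z then |y - B| ^ α + α * |y - B| ^ (α - 1) * (z - B)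
      else |y + B| ^ α - α * |y + B| ^ (α - 1) * (z + B)) :
    ConvexOn ℝ Set.univ φ := by
  obtain ⟨hyl, hyr⟩ := abs_le.mp hy
  have hgd : ∀ z : ℝ, HasDerivAt (fun w : ℝ => |w - y| ^ α)
      (α * (|z - y| ^ (α - 2) * (z - y))) z := by
    intro z
    have h := (absPow_hasDerivAt hα (z - y)).comp z ((hasDerivAt_id z).sub_const y)
    exact h.congr_deriv (mul_one _)
  have hφg : ∀ w : ℝ, |w| ≤ B → φ w = |w - y| ^ α := by
    intro w hw
    rw [hφ w, if_pos hw, abs_sub_comm]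
  have hφR : ∀ w : ℝ, B ≤ w → φ w = |y - B| ^ α + α * |y - B| ^ (α - 1) * (w - B) := by
    intro w hw
    rcases eq_or_lt_of_le hw with h | h
    · rw [← h]
      have h0 : |B| ≤ B := by rw [abs_of_pos hB]
      rw [hφ B, if_pos h0]; ring
    · have h1 : ¬ |w| ≤ B := by
        rw [abs_of_pos (hB.trans h)]; exact not_le.mpr h
      rw [hφ w, if_neg h1, if_pos h]
  have hφL : ∀ w : ℝ, w ≤ -B → φ w = |y + B| ^ α - α * |y + B| ^ (α - 1) * (w + B) := by
    intro w hw
    rcases eq_or_lt_of_le hw with h | h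
    · rw [h]
      have h0 : |(-B)| ≤ B := by rw [abs_neg, abs_of_pos hB]
      rw [hφ (-B), if_pos h0, show y - (-B) = y + B by ring]; ring
    · have h1 : ¬ |w| ≤ B := by
        rw [abs_of_neg (h.trans (by linarith : -B < 0))]; linarith
      have h2 : ¬ B < w := by linarith
      rw [hφ w, if_neg h1, if_neg h2]
  -- clamped derivative values at the breakpoints
  have hDB : α * (|B - y| ^ (α - 2) * (B - y)) = α * |y - B| ^ (α - 1) := by
    rw [abs_of_nonneg (by linarith : (0:ℝ) ≤ B - y), abs_sub_comm,
      abs_of_nonneg (by linarith : (0:ℝ) ≤ B - y),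
      ← rpow_split hα (by linarith : (0:ℝ) ≤ B - y)]
  have hDnB : α * (|(-B) - y| ^ (α - 2) * ((-B) - y)) = -(α * |y + B| ^ (α - 1)) := by
    rw [show (-B) - y = -(y + B) by ring, abs_neg,
      abs_of_nonneg (by linarith : (0:ℝ) ≤ y + B),
      rpow_split hα (by linarith : (0:ℝ) ≤ y + B)]
    ring
  have hℓRd : ∀ z : ℝ, HasDerivAt (fun w : ℝ => |y - B| ^ α + α * |y - B| ^ (α - 1) * (w - B))
      (α * |y - B| ^ (α - 1)) z := by
    intro z
    have h := (((hasDerivAt_id z).sub_const B).const_mul (α * |y - B| ^ (α - 1))).const_add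
      (|y - B| ^ α)
    simpa [mul_comm] using h
  have hℓLd : ∀ z : ℝ, HasDerivAt (fun w : ℝ => |y + B| ^ α - α * |y + B| ^ (α - 1) * (w + B))
      (-(α * |y + B| ^ (α - 1))) z := by
    intro z
    have h := (((hasDerivAt_id z).add_const B).const_mul (α * |y + B| ^ (α - 1))).const_sub
      (|y + B| ^ α)
    simpa [mul_comm] using h
  -- φ has the clamped derivative everywhere
  have hder : ∀ z : ℝ, HasDerivAt φ
      (α * (|max (-B) (min z B) - y| ^ (α - 2) * (max (-B) (min z B) - y))) z := by
    intro z
    rcases lt_trichotomy z (-B) with hz | hz | hz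
    · have hc : max (-B) (min z B) = -B :=
        max_eq_left (by rw [min_eq_left (by linarith : z ≤ B)]; linarith)
      rw [hc, show α * (|(-B) - y| ^ (α - 2) * ((-B) - y)) = -(α * |y + B| ^ (α - 1)) from hDnB]
      refine (hℓLd z).congr_of_eventuallyEq ?_
      filter_upwards [Iio_mem_nhds hz] with w hw
      exact hφL w (le_of_lt (mem_Iio.mp hw))
    · have hc : max (-B) (min z B) = z := by
        rw [min_eq_left (by linarith : z ≤ B)]
        exact max_eq_right (le_of_eq hz.symm)
      rw [hc]
      have he : α * (|z - y| ^ (α - 2) * (z - y)) = -(α * |y + B| ^ (α - 1)) := by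
        rw [hz]; exact hDnB
      have h1 : HasDerivWithinAt φ (α * (|z - y| ^ (α - 2) * (z - y))) (Iic z) z := by
        rw [he]
        exact (hℓLd z).hasDerivWithinAt.congr
          (fun w hw => hφL w (le_trans (mem_Iic.mp hw) (le_of_eq hz)))
          (hφL z (le_of_eq hz))
      have h2 : HasDerivWithinAt φ (α * (|z - y| ^ (α - 2) * (z - y))) (Ici z) z := by
        refine ((hgd z).hasDerivWithinAt).congr_of_eventuallyEq ?_
          (hφg z (by rw [hz, abs_neg, abs_of_pos hB]))
        have hmem : Iio B ∈ nhdsWithin z (Ici z) :=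
          nhdsWithin_le_nhds (Iio_mem_nhds (by linarith))
        filter_upwards [hmem, self_mem_nhdsWithin] with w hw1 hw2
        have hwl : -B ≤ w := le_trans (le_of_eq hz.symm) (mem_Ici.mp hw2)
        exact hφg w (abs_le.mpr ⟨hwl, le_of_lt (mem_Iio.mp hw1)⟩)
      have h3 := h1.union h2
      rw [Iic_union_Ici] at h3
      exact hasDerivWithinAt_univ.mp h3
    · rcases lt_trichotomy z B with hz2 | hz2 | hz2
      · have hc : max (-B) (min z B) = z := by
          rw [min_eq_left (le_of_lt hz2)]
          exact max_eq_right (le_of_lt hz)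
        rw [hc]
        refine (hgd z).congr_of_eventuallyEq ?_
        filter_upwards [Ioo_mem_nhds hz hz2] with w hw
        exact hφg w (abs_le.mpr ⟨le_of_lt hw.1, le_of_lt hw.2⟩)
      · have hc : max (-B) (min z B) = z := by
          rw [min_eq_left (le_of_eq hz2)]
          exact max_eq_right (by linarith)
        rw [hc]
        have h1 : HasDerivWithinAt φ (α * (|z - y| ^ (α - 2) * (z - y))) (Ici z) z := by
          have he : α * (|z - y| ^ (α - 2) * (z - y)) = α * |y - B| ^ (α - 1) := by
            rw [hz2]; exact hDB
          rw [he]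
          exact (hℓRd z).hasDerivWithinAt.congr
            (fun w hw => by rw [hφR w (hz2 ▸ mem_Ici.mp hw)])
            (by rw [hφR z (le_of_eq hz2.symm)])
        have h2 : HasDerivWithinAt φ (α * (|z - y| ^ (α - 2) * (z - y))) (Iic z) z := by
          refine ((hgd z).hasDerivWithinAt).congr_of_eventuallyEq ?_
            (hφg z (by rw [hz2, abs_of_pos hB]))
          have hmem : Ioi (-B) ∈ nhdsWithin z (Iic z) :=
            nhdsWithin_le_nhds (Ioi_mem_nhds (by linarith))
          filter_upwards [hmem, self_mem_nhdsWithin] with w hw1 hw2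
          have : w ≤ B := le_trans (mem_Iic.mp hw2) (le_of_eq hz2)
          exact hφg w (abs_le.mpr ⟨le_of_lt (mem_Ioi.mp hw1), this⟩)
        have h3 := h2.union h1
        rw [Iic_union_Ici] at h3
        exact hasDerivWithinAt_univ.mp h3
      · have hc : max (-B) (min z B) = B := by
          rw [min_eq_right (le_of_lt hz2)]
          exact max_eq_right (by linarith)
        rw [hc, show α * (|B - y| ^ (α - 2) * (B - y)) = α * |y - B| ^ (α - 1) from hDB]
        refine (hℓRd z).congr_of_eventuallyEq ?_
        filter_upwards [Ioi_mem_nhds hz2] with w hw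
        exact hφR w (le_of_lt (mem_Ioi.mp hw))
  -- monotonicity of the derivative
  have hψmono : ∀ a b : ℝ, a ≤ b →
      α * (|max (-B) (min a B) - y| ^ (α - 2) * (max (-B) (min a B) - y)) ≤
      α * (|max (-B) (min b B) - y| ^ (α - 2) * (max (-B) (min b B) - y)) := by
    intro a b hab
    have hcab : max (-B) (min a B) ≤ max (-B) (min b B) :=
      max_le_max le_rfl (min_le_min hab le_rfl)
    have h := signedPow_mono hα (sub_le_sub_right hcab y)
    exact mul_le_mul_of_nonneg_left h (by linarith)
  have hdiff : Differentiable ℝ φ := fun z => (hder z).differentiableAt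
  apply MonotoneOn.convexOn_of_deriv convex_univ hdiff.continuous.continuousOn
  · rw [interior_univ]; exact hdiff.differentiableOn
  · rw [interior_univ]
    intro a _ b _ hab
    rw [(hder a).deriv, (hder b).deriv]
    exact hψmono a b hab
end

section
/- Let U > 0, X > 0, and (xₜ, yₜ)_{t=1..T} ∈ (ℝᵈ×ℝ)^T with ‖xₜ‖_∞ ≤ X for all t. For a positive integer m, let B̃ = {(k₁U/m, …, k_dU/m) : k ∈ ℤᵈ, ∑ⱼ|kⱼ| ≤ m}. Then inf_{u ∈ B̃} ∑ₜ (yₜ − u·xₜ)² ≤ inf_{‖u‖₁ ≤ U} ∑ₜ (yₜ − u·xₜ)² + T·U²·X²/m. -/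
open Finset

section helpers

variable {m : ℕ} {κ : Type*} [Fintype κ] [DecidableEq κ]

lemma exp_one (p g : κ → ℝ) (hp1 : ∑ c, p c = 1) (i : Fin m) :
    ∑ ω : Fin m → κ, (∏ i', p (ω i')) * g (ω i) = ∑ c, p c * g c := by
  set F : Fin m → κ → ℝ := fun i' c => if i' = i then p c * g c else p c with hF
  have hFi : ∀ c, F i c = p c * g c := fun c => by simp [hF]
  have hFo : ∀ j, j ≠ i → ∀ c, F j c = p c := fun j h1 c => by simp [hF, h1]
  have h1 : ∀ ω : Fin m → κ, (∏ i', p (ω i')) * g (ω i) = ∏ i', F i' (ω i') := by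
    intro ω
    have hR : (∏ i', F i' (ω i'))
        = (p (ω i) * g (ω i)) * ∏ i' ∈ univ.erase i, p (ω i') := by
      rw [← Finset.mul_prod_erase univ (fun i' => F i' (ω i')) (mem_univ i), hFi]
      congr 1
      exact Finset.prod_congr rfl fun i' hi' => hFo i' (Finset.ne_of_mem_erase hi') (ω i')
    have hL : (∏ i', p (ω i')) * g (ω i)
        = (p (ω i) * g (ω i)) * ∏ i' ∈ univ.erase i, p (ω i') := by
      rw [← Finset.mul_prod_erase univ (fun i' => p (ω i')) (mem_univ i)]
      ring
    rw [hL, hR]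
  calc ∑ ω : Fin m → κ, (∏ i', p (ω i')) * g (ω i)
      = ∑ ω : Fin m → κ, ∏ i', F i' (ω i') := Finset.sum_congr rfl fun ω _ => h1 ω
    _ = ∏ i', ∑ c, F i' c := (Fintype.prod_sum _).symm
    _ = ∑ c, p c * g c := by
        rw [← Finset.mul_prod_erase univ (fun i' => ∑ c, F i' c) (mem_univ i)]
        have : ∀ i' ∈ univ.erase i, (∑ c, F i' c) = 1 := by
          intro i' hi'
          simp only [hFo i' (Finset.ne_of_mem_erase hi')]
          exact hp1
        rw [Finset.prod_congr rfl this, Finset.prod_const_one, mul_one]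
        simp only [hFi]

lemma exp_two (p g h : κ → ℝ) (hp1 : ∑ c, p c = 1) (i i' : Fin m) (hii' : i ≠ i') :
    ∑ ω : Fin m → κ, (∏ i'', p (ω i'')) * (g (ω i) * h (ω i'))
      = (∑ c, p c * g c) * (∑ c, p c * h c) := by
  have hi'mem : i' ∈ univ.erase i := Finset.mem_erase.2 ⟨hii'.symm, mem_univ i'⟩
  have key : ∀ F : Fin m → κ → ℝ, (∀ c, F i c = p c * g c) → (∀ c, F i' c = p c * h c) →
      (∀ j, j ≠ i → j ≠ i' → ∀ c, F j c = p c) → True := fun _ _ _ _ => trivial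
  set F : Fin m → κ → ℝ := fun i'' c =>
    if i'' = i then p c * g c else if i'' = i' then p c * h c else p c with hF
  have hFi : ∀ c, F i c = p c * g c := fun c => by simp [hF]
  have hFi' : ∀ c, F i' c = p c * h c := fun c => by simp [hF, hii'.symm]
  have hFo : ∀ j, j ≠ i → j ≠ i' → ∀ c, F j c = p c := fun j h1 h2 c => by simp [hF, h1, h2]
  have h1 : ∀ ω : Fin m → κ, (∏ i'', p (ω i'')) * (g (ω i) * h (ω i'))
      = ∏ i'', F i'' (ω i'') := by
    intro ω
    have hR : (∏ i'', F i'' (ω i''))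
        = F i (ω i) * (F i' (ω i') * ∏ j ∈ (univ.erase i).erase i', p (ω j)) := by
      rw [← Finset.mul_prod_erase univ (fun i'' => F i'' (ω i'')) (mem_univ i),
        ← Finset.mul_prod_erase _ _ hi'mem]
      congr 1
      congr 1
      refine Finset.prod_congr rfl fun j hj => ?_
      exact hFo j (Finset.ne_of_mem_erase (Finset.mem_of_mem_erase hj))
        (Finset.ne_of_mem_erase hj) (ω j)
    have hL : (∏ i'', p (ω i'')) * (g (ω i) * h (ω i'))
        = (p (ω i) * g (ω i)) * ((p (ω i') * h (ω i')) * ∏ j ∈ (univ.erase i).erase i', p (ω j)) := by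
      rw [← Finset.mul_prod_erase univ (fun i'' => p (ω i'')) (mem_univ i),
        ← Finset.mul_prod_erase _ _ hi'mem]
      ring
    rw [hL, hR, hFi, hFi']
  calc ∑ ω : Fin m → κ, (∏ i'', p (ω i'')) * (g (ω i) * h (ω i'))
      = ∑ ω : Fin m → κ, ∏ i'', F i'' (ω i'') := Finset.sum_congr rfl fun ω _ => h1 ω
    _ = ∏ i'', ∑ c, F i'' c := (Fintype.prod_sum _).symm
    _ = (∑ c, p c * g c) * (∑ c, p c * h c) := by
        rw [← Finset.mul_prod_erase univ (fun i'' => ∑ c, F i'' c) (mem_univ i),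
          ← Finset.mul_prod_erase _ _ hi'mem]
        have e3 : ∀ j ∈ (univ.erase i).erase i', (∑ c, F j c) = 1 := by
          intro j hj
          have := hFo j (Finset.ne_of_mem_erase (Finset.mem_of_mem_erase hj))
            (Finset.ne_of_mem_erase hj)
          simp only [this]
          exact hp1
        rw [Finset.prod_congr rfl e3, Finset.prod_const_one, mul_one]
        simp only [hFi, hFi']

lemma exp_total (p : κ → ℝ) (hp1 : ∑ c, p c = 1) :
    ∑ ω : Fin m → κ, (∏ i, p (ω i)) = 1 := by
  rw [← Fintype.prod_sum fun _ c => p c]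
  simp [hp1]

lemma expectation_sq (hm : 0 < m) (p : κ → ℝ) (hp1 : ∑ c, p c = 1) (a : ℝ) (Z : κ → ℝ) :
    ∑ ω : Fin m → κ, (∏ i, p (ω i)) * (a - (∑ i, Z (ω i)) / m) ^ 2
      = (a - ∑ c, p c * Z c) ^ 2
        + ((∑ c, p c * (Z c * Z c)) - (∑ c, p c * Z c) ^ 2) / m := by
  have hmR : (0:ℝ) < (m:ℝ) := by exact_mod_cast hm
  set μ : ℝ := ∑ c, p c * Z c with hμ
  set S2 : ℝ := ∑ c, p c * (Z c * Z c) with hS2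
  have expand : ∀ ω : Fin m → κ, (∏ i, p (ω i)) * (a - (∑ i, Z (ω i)) / m) ^ 2
      = a ^ 2 * (∏ i, p (ω i))
        - (2 * a / m) * ((∏ i, p (ω i)) * ∑ i, Z (ω i))
        + (1 / m ^ 2) * ((∏ i, p (ω i)) * ((∑ i, Z (ω i)) * (∑ i, Z (ω i)))) := by
    intro ω
    field_simp
    ring
  simp_rw [expand]
  rw [Finset.sum_add_distrib, Finset.sum_sub_distrib, ← Finset.mul_sum, ← Finset.mul_sum,
    ← Finset.mul_sum, exp_total p hp1]
  have t2 : ∑ ω : Fin m → κ, (∏ i, p (ω i)) * ∑ i, Z (ω i) = m * μ := by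
    have e : ∀ ω : Fin m → κ, (∏ i', p (ω i')) * ∑ i, Z (ω i)
        = ∑ i, (∏ i', p (ω i')) * Z (ω i) := fun ω => Finset.mul_sum _ _ _
    simp_rw [e]
    rw [Finset.sum_comm]
    have : ∀ i : Fin m, ∑ ω : Fin m → κ, (∏ i', p (ω i')) * Z (ω i) = μ :=
      fun i => exp_one p Z hp1 i
    simp_rw [this]
    rw [Finset.sum_const, Finset.card_univ, Fintype.card_fin, nsmul_eq_mul]
  have t3 : ∑ ω : Fin m → κ, (∏ i, p (ω i)) * ((∑ i, Z (ω i)) * (∑ i, Z (ω i)))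
      = m * S2 + ((m:ℝ)^2 - m) * (μ * μ) := by
    have e1 : ∀ ω : Fin m → κ, (∏ i, p (ω i)) * ((∑ i, Z (ω i)) * (∑ i, Z (ω i)))
        = ∑ i, ∑ i', (∏ i'', p (ω i'')) * (Z (ω i) * Z (ω i')) := by
      intro ω
      rw [Finset.sum_mul_sum, Finset.mul_sum]
      refine Finset.sum_congr rfl fun i _ => ?_
      rw [Finset.mul_sum]
    simp_rw [e1]
    have hpair : ∀ i i' : Fin m,
        (∑ ω : Fin m → κ, (∏ i'', p (ω i'')) * (Z (ω i) * Z (ω i')))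
          = if i' = i then S2 else μ * μ := by
      intro i i'
      by_cases h : i' = i
      · subst h
        rw [if_pos rfl, hS2]
        exact exp_one p (fun c => Z c * Z c) hp1 i'
      · rw [if_neg h, hμ]
        exact exp_two p Z Z hp1 i i' (Ne.symm h)
    calc ∑ ω : Fin m → κ, ∑ i, ∑ i', (∏ i'', p (ω i'')) * (Z (ω i) * Z (ω i'))
        = ∑ i, ∑ i', ∑ ω : Fin m → κ, (∏ i'', p (ω i'')) * (Z (ω i) * Z (ω i')) := by
          rw [Finset.sum_comm]
          exact Finset.sum_congr rfl fun i _ => Finset.sum_comm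
      _ = ∑ _i : Fin m, ∑ i' : Fin m, (if (i' : Fin m) = _i then S2 else μ * μ) :=
          Finset.sum_congr rfl fun i _ => Finset.sum_congr rfl fun i' _ => hpair i i'
      _ = m * S2 + ((m:ℝ)^2 - m) * (μ * μ) := by
          have hsplit : ∀ i i' : Fin m, (if i' = i then S2 else μ * μ)
              = μ * μ + (if i' = i then S2 - μ * μ else 0) := by
            intro i i'; split_ifs <;> ring
          simp_rw [hsplit, Finset.sum_add_distrib, Finset.sum_ite_eq' univ, Finset.sum_const,
            Finset.card_univ, Fintype.card_fin, mem_univ, if_pos, nsmul_eq_mul]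
          rw [Finset.sum_const, Finset.card_univ, Fintype.card_fin, nsmul_eq_mul]
          push_cast
          ring
  rw [t2, t3]
  field_simp
  ring

end helpers

lemma exists_le_expectation {Ω : Type*} [Fintype Ω] (W F : Ω → ℝ)
    (hW : ∀ ω, 0 ≤ W ω) (hW1 : ∑ ω, W ω = 1) :
    ∃ ω, F ω ≤ ∑ ω, W ω * F ω := by
  by_contra hcon
  push_neg at hcon
  have hne : ∃ ω₀, 0 < W ω₀ := by
    by_contra h
    push_neg at h
    have : ∑ ω, W ω = 0 := Finset.sum_eq_zero fun ω _ => le_antisymm (h ω) (hW ω)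
    rw [this] at hW1; norm_num at hW1
  obtain ⟨ω₀, hω₀⟩ := hne
  have hlt : ∑ ω, W ω * (∑ ω', W ω' * F ω') < ∑ ω, W ω * F ω := by
    refine Finset.sum_lt_sum (fun ω _ => mul_le_mul_of_nonneg_left (hcon ω).le (hW ω))
      ⟨ω₀, mem_univ ω₀, by exact mul_lt_mul_of_pos_left (hcon ω₀) hω₀⟩
  rw [← Finset.sum_mul, hW1, one_mul] at hlt
  exact lt_irrefl _ hlt

theorem maurey_approximation (d T m : ℕ) (hd : 0 < d) (hT : 0 < T) (hm : 0 < m)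
    (U X : ℝ) (hU : 0 < U) (hX : 0 < X)
    (x : Fin T → Fin d → ℝ) (y : Fin T → ℝ)
    (hx : ∀ t j, |x t j| ≤ X) :
    (⨅ u : {u : Fin d → ℝ //
        ∃ k : Fin d → ℤ, (∀ j, u j = k j * U / m) ∧ ∑ j, |k j| ≤ (m : ℤ)},
      ∑ t, (y t - ∑ j, (u : Fin d → ℝ) j * x t j) ^ 2) ≤
      (⨅ u : {u : Fin d → ℝ // ∑ j, |u j| ≤ U},
        ∑ t, (y t - ∑ j, (u : Fin d → ℝ) j * x t j) ^ 2) +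
        T * U ^ 2 * X ^ 2 / m := by
  classical
  have hmR : (0:ℝ) < (m:ℝ) := by exact_mod_cast hm
  -- key approximation lemma
  have key : ∀ u : Fin d → ℝ, (∑ j, |u j| ≤ U) →
      ∃ v : Fin d → ℝ,
        (∃ k : Fin d → ℤ, (∀ j, v j = k j * U / m) ∧ ∑ j, |k j| ≤ (m:ℤ)) ∧
        ∑ t, (y t - ∑ j, v j * x t j) ^ 2
          ≤ (∑ t, (y t - ∑ j, u j * x t j) ^ 2) + T * U ^ 2 * X ^ 2 / m := by
    intro u hu
    set p : Option (Fin d) → ℝ :=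
      fun c => c.elim (1 - (∑ j, |u j|) / U) (fun j => |u j| / U) with hp
    set Z : Fin T → Option (Fin d) → ℝ :=
      fun t c => c.elim 0 (fun j => Real.sign (u j) * U * x t j) with hZ
    have hp0 : ∀ c, 0 ≤ p c := by
      rintro (_ | j)
      · simp only [hp, Option.elim]
        rw [sub_nonneg, div_le_one hU]
        exact hu
      · simp only [hp, Option.elim]
        positivity
    have hp1 : ∑ c, p c = 1 := by
      rw [Fintype.sum_option]
      simp only [hp, Option.elim]
      rw [← Finset.sum_div]
      ring
    have hsign : ∀ r : ℝ, Real.sign r * |r| = r := by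
      intro r
      rcases lt_trichotomy r 0 with h | h | h
      · rw [Real.sign_of_neg h, abs_of_neg h]; ring
      · simp [h]
      · rw [Real.sign_of_pos h, abs_of_pos h]; ring
    have hμ : ∀ t, ∑ c, p c * Z t c = ∑ j, u j * x t j := by
      intro t
      rw [Fintype.sum_option]
      simp only [hp, hZ, Option.elim]
      rw [mul_zero, zero_add]
      refine Finset.sum_congr rfl fun j _ => ?_
      have : |u j| / U * (Real.sign (u j) * U * x t j)
          = (Real.sign (u j) * |u j|) * x t j * (U / U) := by ring
      rw [this, hsign, div_self hU.ne', mul_one]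
    have hS : ∀ t, ∑ c, p c * (Z t c * Z t c) ≤ U ^ 2 * X ^ 2 := by
      intro t
      rw [Fintype.sum_option]
      simp only [hp, hZ, Option.elim]
      rw [mul_zero, mul_zero, zero_add]
      have hb : ∀ j, |u j| / U * (Real.sign (u j) * U * x t j * (Real.sign (u j) * U * x t j))
          ≤ |u j| * U * X ^ 2 := by
        intro j
        have h1 : |u j| / U * (Real.sign (u j) * U * x t j * (Real.sign (u j) * U * x t j))
            = |u j| * U * (Real.sign (u j) ^ 2 * x t j ^ 2) * (U / U) := by ring
        rw [h1, div_self hU.ne', mul_one]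
        have hs2 : Real.sign (u j) ^ 2 ≤ 1 := by
          rcases Real.sign_apply_eq (u j) with h | h | h <;> rw [h] <;> norm_num
        have hx2 : x t j ^ 2 ≤ X ^ 2 := by
          have := hx t j
          nlinarith [abs_nonneg (x t j), sq_abs (x t j)]
        have hx2' : (0:ℝ) ≤ x t j ^ 2 := sq_nonneg _
        calc |u j| * U * (Real.sign (u j) ^ 2 * x t j ^ 2)
            ≤ |u j| * U * (1 * X ^ 2) := by
              refine mul_le_mul_of_nonneg_left ?_ (by positivity)
              refine mul_le_mul hs2 hx2 hx2' zero_le_one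
          _ = |u j| * U * X ^ 2 := by ring
      calc ∑ j, |u j| / U * (Real.sign (u j) * U * x t j * (Real.sign (u j) * U * x t j))
          ≤ ∑ j, |u j| * U * X ^ 2 := Finset.sum_le_sum fun j _ => hb j
        _ = (∑ j, |u j|) * (U * X ^ 2) := by simp_rw [mul_assoc]; rw [← Finset.sum_mul]
        _ ≤ U * (U * X ^ 2) := by
            refine mul_le_mul_of_nonneg_right hu (by positivity)
        _ = U ^ 2 * X ^ 2 := by ring
    -- expectation bound
    set W : (Fin m → Option (Fin d)) → ℝ := fun ω => ∏ i, p (ω i) with hW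
    set G : (Fin m → Option (Fin d)) → ℝ :=
      fun ω => ∑ t, (y t - (∑ i, Z t (ω i)) / m) ^ 2 with hG
    have hexp : ∑ ω, W ω * G ω
        ≤ (∑ t, (y t - ∑ j, u j * x t j) ^ 2) + T * U ^ 2 * X ^ 2 / m := by
      have swap : ∑ ω, W ω * G ω
          = ∑ t, ∑ ω : Fin m → Option (Fin d), W ω * (y t - (∑ i, Z t (ω i)) / m) ^ 2 := by
        simp_rw [hG, Finset.mul_sum]
        exact Finset.sum_comm
      rw [swap]
      have per_t : ∀ t, ∑ ω : Fin m → Option (Fin d), W ω * (y t - (∑ i, Z t (ω i)) / m) ^ 2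
          ≤ (y t - ∑ j, u j * x t j) ^ 2 + U ^ 2 * X ^ 2 / m := by
        intro t
        rw [hW]
        rw [expectation_sq hm p hp1 (y t) (Z t), hμ t]
        have h1 : (∑ c, p c * (Z t c * Z t c)) - (∑ j, u j * x t j) ^ 2 ≤ U ^ 2 * X ^ 2 := by
          rw [← hμ t]
          exact le_trans (sub_le_self _ (sq_nonneg _)) (hS t)
        gcongr
      calc ∑ t, ∑ ω : Fin m → Option (Fin d), W ω * (y t - (∑ i, Z t (ω i)) / m) ^ 2
          ≤ ∑ t, ((y t - ∑ j, u j * x t j) ^ 2 + U ^ 2 * X ^ 2 / m) :=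
            Finset.sum_le_sum fun t _ => per_t t
        _ = (∑ t, (y t - ∑ j, u j * x t j) ^ 2) + T * U ^ 2 * X ^ 2 / m := by
            rw [Finset.sum_add_distrib, Finset.sum_const, Finset.card_univ, Fintype.card_fin,
              nsmul_eq_mul]
            ring
    have hW0 : ∀ ω, 0 ≤ W ω := fun ω => Finset.prod_nonneg fun i _ => hp0 (ω i)
    have hW1 : ∑ ω, W ω = 1 := exp_total p hp1
    obtain ⟨ω, hω⟩ := exists_le_expectation W G hW0 hW1
    -- build the grid point from ω
    set cnt : Fin d → ℕ := fun j => (univ.filter (fun i => ω i = some j)).card with hcnt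
    set s : Fin d → ℤ := fun j => if u j < 0 then -1 else if 0 < u j then 1 else 0 with hs
    set k : Fin d → ℤ := fun j => s j * cnt j with hk
    have hsignk : ∀ j, (s j : ℝ) = Real.sign (u j) := by
      intro j
      simp only [hs]
      unfold Real.sign
      split_ifs <;> simp
    have hdot : ∀ t, ∑ j, ((k j : ℝ) * U / m) * x t j = (∑ i, Z t (ω i)) / m := by
      intro t
      have helim : ∀ i, Z t (ω i) = ∑ j, if ω i = some j then Real.sign (u j) * U * x t j else 0 := by
        intro i
        rcases hω' : ω i with _ | j₀
        · simp [hZ]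
        · simp [hZ]
      have hsum : ∑ i, Z t (ω i)
          = ∑ j, (cnt j : ℝ) * (Real.sign (u j) * U * x t j) := by
        simp_rw [helim]
        rw [Finset.sum_comm]
        refine Finset.sum_congr rfl fun j _ => ?_
        rw [← Finset.sum_filter, Finset.sum_const, nsmul_eq_mul, hcnt]
      rw [hsum, Finset.sum_div]
      refine Finset.sum_congr rfl fun j _ => ?_
      rw [hk]
      push_cast
      rw [hsignk j]
      ring
    have hcard : ∑ j, |k j| ≤ (m : ℤ) := by
      have h1 : ∀ j, |k j| ≤ (cnt j : ℤ) := by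
        intro j
        rw [hk, abs_mul, Int.abs_natCast]
        have : |s j| ≤ 1 := by simp only [hs]; split_ifs <;> simp
        calc |s j| * (cnt j : ℤ) ≤ 1 * (cnt j : ℤ) :=
              mul_le_mul_of_nonneg_right this (Int.natCast_nonneg _)
          _ = (cnt j : ℤ) := one_mul _
      have h2 : ∑ j, (cnt j : ℤ) ≤ (m : ℤ) := by
        have : ∀ j, (cnt j : ℤ) = ∑ i, if ω i = some j then 1 else 0 := by
          intro j
          rw [hcnt, ← Finset.sum_filter, Finset.sum_const, nsmul_eq_mul, mul_one]
        simp_rw [this]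
        rw [Finset.sum_comm]
        have hone : ∀ i, (∑ j, if ω i = some j then (1:ℤ) else 0) ≤ 1 := by
          intro i
          rcases hω' : ω i with _ | j₀
          · simp
          · simp [Finset.sum_ite_eq]
        calc ∑ i, ∑ j, (if ω i = some j then (1:ℤ) else 0) ≤ ∑ _i : Fin m, (1:ℤ) :=
              Finset.sum_le_sum fun i _ => hone i
          _ = (m : ℤ) := by simp
      exact le_trans (Finset.sum_le_sum fun j _ => h1 j) h2
    refine ⟨fun j => (k j : ℝ) * U / m, ⟨k, fun j => rfl, hcard⟩, ?_⟩
    have : ∑ t, (y t - ∑ j, ((k j : ℝ) * U / m) * x t j) ^ 2 = G ω := by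
      rw [hG]
      exact Finset.sum_congr rfl fun t _ => by rw [hdot t]
    rw [this]
    exact le_trans hω hexp
  -- assemble via infima
  have hGridNe : Nonempty {u : Fin d → ℝ //
      ∃ k : Fin d → ℤ, (∀ j, u j = k j * U / m) ∧ ∑ j, |k j| ≤ (m : ℤ)} :=
    ⟨⟨fun _ => 0, fun _ => 0, fun j => by simp, by simp⟩⟩
  have hBallNe : Nonempty {u : Fin d → ℝ // ∑ j, |u j| ≤ U} :=
    ⟨⟨fun _ => 0, by simp [hU.le]⟩⟩
  have hbdd : BddBelow (Set.range fun u : {u : Fin d → ℝ //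
      ∃ k : Fin d → ℤ, (∀ j, u j = k j * U / m) ∧ ∑ j, |k j| ≤ (m : ℤ)} =>
      ∑ t, (y t - ∑ j, (u : Fin d → ℝ) j * x t j) ^ 2) := by
    refine ⟨0, ?_⟩
    rintro _ ⟨v, rfl⟩
    positivity
  rw [← sub_le_iff_le_add]
  refine le_ciInf fun u => ?_
  rw [sub_le_iff_le_add]
  obtain ⟨v, hvmem, hvbound⟩ := key u.1 u.2
  exact le_trans (ciInf_le hbdd ⟨v, hvmem⟩) hvbound
end

section
/- For every Y > 0 and every y ∈ [−Y, Y], the function x ↦ exp(−(y − x)²/(8Y²)) is concave on [−Y, Y]. -/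
theorem square_loss_exp_concave (Y y : ℝ) (hY : 0 < Y)
    (hy : y ∈ Set.Icc (-Y) Y) :
    ConcaveOn ℝ (Set.Icc (-Y) Y)
      (fun x : ℝ => Real.exp (-(y - x) ^ 2 / (8 * Y ^ 2))) := by
  have hc : (0:ℝ) < 8 * Y ^ 2 := by positivity
  set c : ℝ := 8 * Y ^ 2 with hcdef
  set g : ℝ → ℝ := fun x => -(y - x) ^ 2 / c with hg
  have hgd : ∀ x : ℝ, HasDerivAt g (2 * (y - x) / c) x := by
    intro x
    have h1 : HasDerivAt (fun x : ℝ => y - x) (-1) x := by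
      simpa using (hasDerivAt_id x).const_sub y
    have h2 : HasDerivAt (fun x : ℝ => (y - x) ^ 2) (2 * (y - x) * (-1)) x := by
      simpa using h1.fun_pow 2
    have h3 := (h2.fun_neg).div_const c
    convert h3 using 1
    · rfl
    · rfl
    ring
  set f' : ℝ → ℝ := fun x => Real.exp (g x) * (2 * (y - x) / c) with hf'
  have hfd : ∀ x : ℝ, HasDerivAt (fun x : ℝ => Real.exp (g x)) (f' x) x := by
    intro x
    exact (hgd x).exp
  have hfd' : ∀ x : ℝ,
      HasDerivAt f' (Real.exp (g x) * ((2 * (y - x) / c) ^ 2 - 2 / c)) x := by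
    intro x
    have h1 := (hfd x).mul (((hgd x).pow 1).neg.div_const c |>.const_mul 2 |> fun h => h)
    -- compute directly instead
    have h2 : HasDerivAt (fun x : ℝ => 2 * (y - x) / c) (-2 / c) x := by
      have : HasDerivAt (fun x : ℝ => y - x) (-1) x := by
        simpa using (hasDerivAt_id x).const_sub y
      have := (this.const_mul 2).div_const c
      convert this using 1; rfl; rfl; ring
    have h3 := (hfd x).fun_mul h2
    convert h3 using 1
    · rfl
    · rfl
    simp only [hf']
    ring
  apply concaveOn_of_hasDerivWithinAt2_nonpos (convex_Icc _ _)
    (f' := f') (f'' := fun x => Real.exp (g x) * ((2 * (y - x) / c) ^ 2 - 2 / c))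
  · exact (Real.continuous_exp.comp (by fun_prop)).continuousOn
  · exact fun x _ => (hfd x).hasDerivWithinAt
  · exact fun x _ => (hfd' x).hasDerivWithinAt
  · intro x hx
    rw [interior_Icc] at hx
    have hx1 : |y - x| ≤ 2 * Y := by
      rw [abs_le]
      constructor <;> nlinarith [hy.1, hy.2, hx.1, hx.2]
    have hsq : (y - x) ^ 2 ≤ 4 * Y ^ 2 := by
      nlinarith [abs_nonneg (y - x), sq_abs (y - x)]
    have : (2 * (y - x) / c) ^ 2 - 2 / c ≤ 0 := by
      rw [div_pow, sub_nonpos, div_le_div_iff₀ (by positivity) hc]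
      nlinarith
    exact mul_nonpos_of_nonneg_of_nonpos (Real.exp_pos _).le this
end
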